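/- arXiv:1203.4301 — 6 statements merged into one kernel-verified Lean document; each statement's English description precedes it below -/
import Mathlib

section
/- Let t, t_N : ℝ → ℝ be convex functions with t_N ≤ t pointwise and suppose 2 t_N(β) > t(2β) for all β ∈ ℝ. Then for every β ∈ ℝ and every α ∈ -∂t_N(β), we have -t_N*(-α) > -t*(-α)/2. -/
/- STATEMENT 5: If t_N ≤ t are convex with 2 t_N(β) > t(2β) for all β, then for every β
and every α ∈ -∂t_N(β) (i.e. -α is a subgradient of t_N at β) we have
-t_N*(-α) > -t*(-α)/2, expressed equivalently as 2 · t_N*(-α) < t*(-α) in EReal. -/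
theorem stmt5 (t tN : ℝ → ℝ) (ht : ConvexOn ℝ Set.univ t) (htN : ConvexOn ℝ Set.univ tN)
    (hle : ∀ x : ℝ, tN x ≤ t x) (h : ∀ β : ℝ, t (2 * β) < 2 * tN β)
    (β α : ℝ) (hα : ∀ x : ℝ, tN β + (-α) * (x - β) ≤ tN x) :
    (2 : EReal) * (⨆ b : ℝ, ((b * (-α) - tN b : ℝ) : EReal)) <
      ⨆ b : ℝ, ((b * (-α) - t b : ℝ) : EReal) := by
  have hsup : (⨆ b : ℝ, ((b * (-α) - tN b : ℝ) : EReal)) = ((β * (-α) - tN β : ℝ) : EReal) := by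
    apply le_antisymm
    · apply iSup_le
      intro b
      have := hα b
      exact_mod_cast (by nlinarith : b * (-α) - tN b ≤ β * (-α) - tN β)
    · exact le_iSup (fun b => ((b * (-α) - tN b : ℝ) : EReal)) β
  rw [hsup]
  calc (2 : EReal) * ((β * (-α) - tN β : ℝ) : EReal)
      = ((2 * (β * (-α) - tN β) : ℝ) : EReal) := by
        rw [show ((2 : EReal)) = ((2 : ℝ) : EReal) by norm_cast, ← EReal.coe_mul]
    _ < (((2 * β) * (-α) - t (2 * β) : ℝ) : EReal) := by
        exact_mod_cast (by nlinarith [h β] : 2 * (β * (-α) - tN β) < (2 * β) * (-α) - t (2 * β))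
    _ ≤ ⨆ b : ℝ, ((b * (-α) - t b : ℝ) : EReal) :=
        le_iSup (fun b => ((b * (-α) - t b : ℝ) : EReal)) (2 * β)
end

section
/- Let t, t_N : ℝ → ℝ be convex functions with t_N ≤ t pointwise. Then the interior of ∂t_N(ℝ) := ⋃_β ∂t_N(β) is contained in the interior of ∂t(ℝ) := ⋃_β ∂t(β). -/
/- STATEMENT 7: If t_N ≤ t are convex functions on ℝ, then
Int(∂t_N(ℝ)) ⊆ Int(∂t(ℝ)), where ∂h(ℝ) = ⋃_β ∂h(β). -/
theorem stmt7 (t tN : ℝ → ℝ) (ht : ConvexOn ℝ Set.univ t) (htN : ConvexOn ℝ Set.univ tN)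
    (hle : ∀ x : ℝ, tN x ≤ t x) :
    interior (⋃ b : ℝ, {a : ℝ | ∀ x : ℝ, tN b + a * (x - b) ≤ tN x}) ⊆
      interior (⋃ b : ℝ, {a : ℝ | ∀ x : ℝ, t b + a * (x - b) ≤ t x}) := by
  apply interior_maximal ?_ isOpen_interior
  intro α hα
  rw [mem_interior_iff_mem_nhds, Metric.mem_nhds_iff] at hα
  obtain ⟨ε, hε, hball⟩ := hα
  set δ := ε / 2 with hδdef
  have hδ : 0 < δ := by positivity
  have h1 : α - δ ∈ ⋃ b : ℝ, {a : ℝ | ∀ x : ℝ, tN b + a * (x - b) ≤ tN x} := by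
    apply hball
    simp [Metric.mem_ball, Real.dist_eq, abs_lt]
    constructor <;> [linarith; linarith]
  have h2 : α + δ ∈ ⋃ b : ℝ, {a : ℝ | ∀ x : ℝ, tN b + a * (x - b) ≤ tN x} := by
    apply hball
    simp [Metric.mem_ball, Real.dist_eq, abs_lt]
    constructor <;> [linarith; linarith]
  obtain ⟨β₁, hβ₁⟩ := Set.mem_iUnion.mp h1
  obtain ⟨β₂, hβ₂⟩ := Set.mem_iUnion.mp h2
  simp only [Set.mem_setOf_eq] at hβ₁ hβ₂
  have hb12 : β₁ ≤ β₂ := by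
    have e1 := hβ₁ β₂
    have e2 := hβ₂ β₁
    nlinarith
  -- continuity of t
  have htc : Continuous t := by
    have := ht.continuousOn isOpen_univ
    rw [← continuousOn_univ]; exact this
  set L := β₁ - (t β₁ - tN β₁) / δ - 1 with hL
  set R := β₂ + (t β₂ - tN β₂) / δ + 1 with hR
  have hd1 : 0 ≤ t β₁ - tN β₁ := by linarith [hle β₁]
  have hd2 : 0 ≤ t β₂ - tN β₂ := by linarith [hle β₂]
  have hLβ₁ : L ≤ β₁ := by
    have : 0 ≤ (t β₁ - tN β₁) / δ := by positivity
    simp [hL]; linarith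
  have hβ₂R : β₂ ≤ R := by
    have : 0 ≤ (t β₂ - tN β₂) / δ := by positivity
    simp [hR]; linarith
  have hLR : L ≤ R := le_trans hLβ₁ (le_trans hb12 hβ₂R)
  obtain ⟨β, hβK, hmin⟩ := (isCompact_Icc (a := L) (b := R)).exists_isMinOn
    ⟨L, Set.left_mem_Icc.mpr hLR⟩
    (f := fun x => t x - α * x) (htc.sub (continuous_const.mul continuous_id)).continuousOn
  have hmin' : ∀ y ∈ Set.Icc L R, t β - α * β ≤ t y - α * y := fun y hy => hmin hy
  have hβ1K : β₁ ∈ Set.Icc L R := ⟨hLβ₁, le_trans hb12 hβ₂R⟩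
  have hβ2K : β₂ ∈ Set.Icc L R := ⟨le_trans hLβ₁ hb12, hβ₂R⟩
  have hcancel1 : δ * ((t β₁ - tN β₁) / δ) = t β₁ - tN β₁ := by
    field_simp
  have hcancel2 : δ * ((t β₂ - tN β₂) / δ) = t β₂ - tN β₂ := by
    field_simp
  refine Set.mem_iUnion.mpr ⟨β, fun x => ?_⟩
  rcases lt_or_ge x L with hx | hxL
  · -- x < L : use the lower bound from β₁
    have e1 := hβ₁ x
    have e2 := hmin' β₁ hβ1K
    have hxL' : δ * x ≤ δ * L := by nlinarith
    have : tN β₁ + (α - δ) * (x - β₁) - α * x ≥ t β₁ - α * β₁ := by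
      have : δ * L = δ * β₁ - (t β₁ - tN β₁) - δ := by
        rw [hL, mul_sub, mul_sub, hcancel1, mul_one]
      nlinarith
    linarith [hle x]
  · rcases le_or_gt x R with hxR | hx
    · have := hmin' x ⟨hxL, hxR⟩
      linarith
    · -- x > R : use the lower bound from β₂
      have e1 := hβ₂ x
      have e2 := hmin' β₂ hβ2K
      have hxR' : δ * R ≤ δ * x := by nlinarith
      have : tN β₂ + (α + δ) * (x - β₂) - α * x ≥ t β₂ - α * β₂ := by
        have : δ * R = δ * β₂ + (t β₂ - tN β₂) + δ := by
          rw [hR, mul_add, mul_add, hcancel2, mul_one]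
        nlinarith
      linarith [hle x]
end

section
/- Let t, t_N : ℝ → ℝ be convex functions with t_N ≤ t pointwise and 2 t_N(β) ≥ t(2β) for all β. Then the interiors of ∂t_N(ℝ) and ∂t(ℝ) coincide. -/
open Filter

/-- If `x ↦ (a+ε)x - f x` and `x ↦ (a-ε)x - f x` are bounded above and `f` is continuous,
then the slope `a` is a subgradient of `f` at some point. -/
lemma key_attain (f : ℝ → ℝ) (hf : Continuous f) (a ε C₁ C₂ : ℝ) (hε : 0 < ε)
    (h1 : ∀ x, (a + ε) * x - f x ≤ C₁) (h2 : ∀ x, (a - ε) * x - f x ≤ C₂) :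
    ∃ b, ∀ x, f b + a * (x - b) ≤ f x := by
  have hg : Continuous fun x : ℝ => a * x - f x := by continuity
  have htop : Tendsto (fun x : ℝ => a * x - f x) atTop atBot := by
    have hdom : Tendsto (fun x : ℝ => C₁ - ε * x) atTop atBot := by
      apply tendsto_atBot_add_const_left
      exact (tendsto_neg_atBot_iff).mpr (((tendsto_const_mul_atTop_of_pos hε).mpr tendsto_id))
        |>.congr (fun x => by simp)
    refine tendsto_atBot_mono' atTop ?_ hdom
    filter_upwards with x
    have := h1 x; nlinarith
  have hbot : Tendsto (fun x : ℝ => a * x - f x) atBot atBot := by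
    have hdom : Tendsto (fun x : ℝ => C₂ + ε * x) atBot atBot := by
      apply tendsto_atBot_add_const_left
      exact Tendsto.const_mul_atBot hε tendsto_id
    refine tendsto_atBot_mono' atBot ?_ hdom
    filter_upwards with x
    have := h2 x; nlinarith
  have hco : Tendsto (fun x : ℝ => a * x - f x) (cocompact ℝ) atBot := by
    rw [cocompact_eq_atBot_atTop]; exact Tendsto.sup hbot htop
  obtain ⟨b, hb⟩ := hg.exists_forall_ge hco
  exact ⟨b, fun x => by have := hb x; nlinarith⟩

theorem stmt8 (t tN : ℝ → ℝ) (ht : ConvexOn ℝ Set.univ t) (htN : ConvexOn ℝ Set.univ tN)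
    (hle : ∀ x : ℝ, tN x ≤ t x) (h : ∀ β : ℝ, t (2 * β) ≤ 2 * tN β) :
    interior (⋃ b : ℝ, {a : ℝ | ∀ x : ℝ, tN b + a * (x - b) ≤ tN x}) =
      interior (⋃ b : ℝ, {a : ℝ | ∀ x : ℝ, t b + a * (x - b) ≤ t x}) := by
  set SN := ⋃ b : ℝ, {a : ℝ | ∀ x : ℝ, tN b + a * (x - b) ≤ tN x} with hSN
  set S := ⋃ b : ℝ, {a : ℝ | ∀ x : ℝ, t b + a * (x - b) ≤ t x} with hS
  have hct : Continuous t := continuousOn_univ.mp (ht.continuousOn isOpen_univ)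
  have hctN : Continuous tN := continuousOn_univ.mp (htN.continuousOn isOpen_univ)
  -- boundedness of conjugate at a slope in SN transfers to t
  have hbN : ∀ a' ∈ SN, ∃ C, ∀ x, a' * x - t x ≤ C := by
    intro a' ha'
    obtain ⟨s, ⟨b, rfl⟩, hmem⟩ := ha'
    exact ⟨a' * b - tN b, fun x => by have h1 := hmem x; have h2 := hle x; nlinarith⟩
  -- boundedness of conjugate at a slope in S transfers to tN
  have hbS : ∀ a' ∈ S, ∃ C, ∀ x, a' * x - tN x ≤ C := by
    intro a' ha'
    obtain ⟨s, ⟨b, rfl⟩, hmem⟩ := ha'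
    refine ⟨(a' * b - t b) / 2, fun x => ?_⟩
    have h1 := hmem (2 * x)
    have h2 := h x
    nlinarith
  have hIN : interior SN ⊆ S := by
    intro a ha
    rw [mem_interior_iff_mem_nhds, Metric.mem_nhds_iff] at ha
    obtain ⟨ε, hε, hball⟩ := ha
    have hmem : ∀ δ : ℝ, |δ| < ε → a + δ ∈ SN := fun δ hδ =>
      hball (by simpa [Real.dist_eq] using hδ)
    obtain ⟨C₁, hC₁⟩ := hbN (a + ε / 2) (hmem _ (by rw [abs_of_pos (by linarith)]; linarith))
    obtain ⟨C₂, hC₂⟩ := hbN (a - ε / 2) (by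
      have := hmem (-(ε / 2)) (by rw [abs_neg, abs_of_pos (by linarith)]; linarith)
      simpa [sub_eq_add_neg] using this)
    obtain ⟨b, hb⟩ := key_attain t hct a (ε / 2) C₁ C₂ (by linarith) hC₁ hC₂
    exact Set.mem_iUnion.mpr ⟨b, hb⟩
  have hIS : interior S ⊆ SN := by
    intro a ha
    rw [mem_interior_iff_mem_nhds, Metric.mem_nhds_iff] at ha
    obtain ⟨ε, hε, hball⟩ := ha
    have hmem : ∀ δ : ℝ, |δ| < ε → a + δ ∈ S := fun δ hδ =>
      hball (by simpa [Real.dist_eq] using hδ)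
    obtain ⟨C₁, hC₁⟩ := hbS (a + ε / 2) (hmem _ (by rw [abs_of_pos (by linarith)]; linarith))
    obtain ⟨C₂, hC₂⟩ := hbS (a - ε / 2) (by
      have := hmem (-(ε / 2)) (by rw [abs_neg, abs_of_pos (by linarith)]; linarith)
      simpa [sub_eq_add_neg] using this)
    obtain ⟨b, hb⟩ := key_attain tN hctN a (ε / 2) C₁ C₂ (by linarith) hC₁ hC₂
    exact Set.mem_iUnion.mpr ⟨b, hb⟩
  apply le_antisymm
  · calc interior SN = interior (interior SN) := (interior_interior).symm
      _ ⊆ interior S := interior_mono hIN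
  · calc interior S = interior (interior S) := (interior_interior).symm
      _ ⊆ interior SN := interior_mono hIS
end

section
/- Let F_d be the free group on d ≥ 2 generators and N a non-trivial normal subgroup of F_d. Then the group-extended Markov system on Σ × (F_d/N) is irreducible: for any two symbols a, b ∈ I = {g_1^{±1},…,g_d^{±1}} and any coset g ∈ F_d/N, there exists a reduced word ω such that a·ω·b is a reduced word and ω projects to g in F_d/N. Equivalently, for all i, j ∈ I and all g ∈ F_d/N there exists a reduced word connecting i to j whose image mod N is g. -/
open FreeGroup List

/-- If a fintype has more than 3 elements, we can avoid any three of them. -/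
lemma avoid3 {α : Type*} [Fintype α] [DecidableEq α] (h : 3 < Fintype.card α)
    (p q r : α) : ∃ z : α, z ≠ p ∧ z ≠ q ∧ z ≠ r := by
  by_contra hc
  push_neg at hc
  have hsub : (Finset.univ : Finset α) ⊆ {p, q, r} := by
    intro z _
    simp only [Finset.mem_insert, Finset.mem_singleton]
    by_cases h1 : z = p
    · exact Or.inl h1
    by_cases h2 : z = q
    · exact Or.inr (Or.inl h2)
    exact Or.inr (Or.inr (hc z h1 h2))
  have hcard := Finset.card_le_card hsub
  rw [Finset.card_univ] at hcard
  have h3 : ({p, q, r} : Finset α).card ≤ 3 := by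
    apply (Finset.card_insert_le _ _).trans
    apply Nat.succ_le_succ
    apply (Finset.card_insert_le _ _).trans
    simp
  omega

/-- The "inverse letter" map is injective on letters. -/
lemma linv_inj {α : Type*} {x y : α × Bool} (h : (x.1, !x.2) = (y.1, !y.2)) : x = y := by
  rw [Prod.ext_iff] at h ⊢
  exact ⟨h.1, Bool.not_inj h.2⟩

lemma not_chain'_decomp {α : Type*} :
    ∀ (L : List (α × Bool)), ¬ L.Chain' (fun x y => y ≠ (x.1, !x.2)) →
      ∃ L₂ L₃ x b, L = L₂ ++ (x, b) :: (x, !b) :: L₃ := by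
  intro L
  induction L with
  | nil => intro h; exact absurd List.isChain_nil h
  | cons p t ih =>
    intro h
    rw [List.Chain', List.isChain_cons] at h
    rcases not_and_or.mp h with h1 | h2
    · push_neg at h1
      obtain ⟨y, hy, hyp⟩ := h1
      cases t with
      | nil => simp at hy
      | cons q t' =>
        simp at hy
        subst hy
        exact ⟨[], t', p.1, p.2, by simp [hyp]⟩
    · obtain ⟨L₂, L₃, x, b, hx⟩ := ih h2
      exact ⟨p :: L₂, L₃, x, b, by simp [hx]⟩

/-- The reduced word of an element of a free group has no adjacent cancelling pair. -/
lemma chain'_toWord {α : Type*} [DecidableEq α] (x : FreeGroup α) :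
    x.toWord.Chain' (fun x y => y ≠ (x.1, !x.2)) := by
  have hred : reduce x.toWord = x.toWord := by
    rcases x with ⟨L⟩
    exact reduce.idem
  by_contra h
  obtain ⟨L₂, L₃, s, b, hx⟩ := not_chain'_decomp _ h
  exact reduce.not (hred.trans hx)

lemma prod_map_mk {α : Type*} (l : List (α × Bool)) :
    (l.map fun x => FreeGroup.mk [x]).prod = FreeGroup.mk l := by
  induction l with
  | nil => simp [FreeGroup.one_eq_mk]
  | cons x t ih => simp [ih, FreeGroup.mul_mk]

/-- Key lemma: conjugating a nontrivial element of `N` by a suitable word of length 2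
gives a reduced word representing an element of `N`, whose first letter `c` avoids two
prescribed letters and whose last letter is `c⁻¹`. -/
lemma key {d : ℕ} (hd : 2 ≤ d) (N : Subgroup (FreeGroup (Fin d))) [hNn : N.Normal]
    (n : FreeGroup (Fin d)) (hnN : n ∈ N) (hn1 : n ≠ 1) (x₁ x₂ : Fin d × Bool) :
    ∃ (c : Fin d × Bool) (v : List (Fin d × Bool)), c ≠ x₁ ∧ c ≠ x₂ ∧ v ≠ [] ∧
      v.head? = some c ∧ v.getLast? = some (c.1, !c.2) ∧
      v.Chain' (fun x y => y ≠ (x.1, !x.2)) ∧ FreeGroup.mk v ∈ N := by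
  have hcard : 3 < Fintype.card (Fin d × Bool) := by
    simp [Fintype.card_prod]
    omega
  set u := n.toWord with hu
  have hune : u ≠ [] := by
    simpa [hu, toWord_eq_nil_iff] using hn1
  have huch : u.Chain' (fun x y => y ≠ (x.1, !x.2)) := chain'_toWord n
  have humk : FreeGroup.mk u = n := mk_toWord
  obtain ⟨u₁, u', hu'⟩ : ∃ u₁ u', u = u₁ :: u' := by
    cases hc : u with
    | nil => exact absurd hc hune
    | cons a l => exact ⟨a, l, rfl⟩
  set uk := u.getLast hune with huk
  obtain ⟨c, hc1, hc2, -⟩ := avoid3 hcard x₁ x₂ x₂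
  obtain ⟨e, he1, he2, he3⟩ := avoid3 hcard (c.1, !c.2) (u₁.1, !u₁.2) uk
  refine ⟨c, c :: e :: (u ++ [(e.1, !e.2), (c.1, !c.2)]), hc1, hc2, by simp, rfl, ?_, ?_, ?_⟩
  · rw [show c :: e :: (u ++ [(e.1, !e.2), (c.1, !c.2)])
        = (c :: e :: (u ++ [(e.1, !e.2)])) ++ [(c.1, !c.2)] by simp]
    exact List.getLast?_concat
  · -- Chain'
    rw [List.Chain', List.isChain_cons_cons]
    refine ⟨he1, ?_⟩
    rw [hu', List.cons_append, List.isChain_cons_cons]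
    constructor
    · intro h
      apply he2
      rw [h]
      simp
    rw [← List.cons_append, ← hu']
    refine huch.append ?_ ?_
    · rw [List.isChain_cons_cons]
      refine ⟨?_, List.isChain_singleton _⟩
      intro h
      simp only [Bool.not_not, Prod.mk.eta] at h
      exact he1 h.symm
    · intro x hx y hy
      simp only [List.head?_cons, Option.mem_some_iff] at hy
      subst hy
      rw [List.getLast?_eq_getLast hune] at hx
      simp only [Option.mem_some_iff] at hx
      subst hx
      intro h
      exact he3 (linv_inj h)
  · -- membership in N
    have hlist : (c :: e :: (u ++ [(e.1, !e.2), (c.1, !c.2)])) =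
        [c, e] ++ u ++ FreeGroup.invRev [c, e] := by
      simp [FreeGroup.invRev]
    rw [hlist, ← FreeGroup.mul_mk, ← FreeGroup.mul_mk, ← FreeGroup.inv_mk, humk]
    exact hNn.conj_mem n hnN (FreeGroup.mk [c, e])

theorem stmt10 (d : ℕ) (hd : 2 ≤ d)
    (N : Subgroup (FreeGroup (Fin d))) [N.Normal] (hN : N ≠ ⊥) :
    ∀ a b : Fin d × Bool, ∀ g : FreeGroup (Fin d) ⧸ N,
      ∃ ω : List (Fin d × Bool), ω ≠ [] ∧
        (a :: (ω ++ [b])).Chain' (fun x y => y ≠ (x.1, !x.2)) ∧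
        (QuotientGroup.mk ((ω.map fun x => FreeGroup.mk [x]).prod) : FreeGroup (Fin d) ⧸ N)
          = g := by
  intro a b g
  rw [Subgroup.ne_bot_iff_exists_ne_one] at hN
  obtain ⟨⟨n, hnN⟩, hn1'⟩ := hN
  have hn1 : n ≠ 1 := by simpa [Subtype.ext_iff] using hn1'
  obtain ⟨h, rfl⟩ := QuotientGroup.mk_surjective g
  have hwch := chain'_toWord h
  have hwmk : FreeGroup.mk h.toWord = h := mk_toWord
  cases hw : h.toWord with
  | nil =>
    have h1 : h = 1 := by rwa [toWord_eq_nil_iff] at hw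
    obtain ⟨c, v, hc1, hc2, hvne, hvh, hvl, hvch, hvN⟩ := key hd N n hnN hn1 (a.1, !a.2) b
    refine ⟨v, hvne, ?_, ?_⟩
    · rw [List.Chain', List.isChain_cons]
      constructor
      · intro y hy
        rw [List.head?_append, hvh] at hy
        simp at hy
        subst hy
        exact hc1
      · refine hvch.append (List.isChain_singleton _) ?_
        intro x hx y hy
        simp only [List.head?_cons, Option.mem_some_iff] at hy
        subst hy
        rw [hvl] at hx
        simp only [Option.mem_some_iff] at hx
        subst hx
        intro hb
        apply hc2
        rw [hb]
        simp
    · rw [prod_map_mk, h1]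
      have : (QuotientGroup.mk (FreeGroup.mk v) : FreeGroup (Fin d) ⧸ N) = 1 :=
        (QuotientGroup.eq_one_iff _).mpr hvN
      rw [this]
      simp
  | cons f t =>
    have hwne : h.toWord ≠ [] := by simp [hw]
    set w := h.toWord with hwdef
    set l := w.getLast hwne with hl
    obtain ⟨c₁, v₁, h11, h12, h1ne, h1h, h1l, h1ch, h1N⟩ := key hd N n hnN hn1 (a.1, !a.2) f
    obtain ⟨c₂, v₂, h21, h22, h2ne, h2h, h2l, h2ch, h2N⟩ := key hd N n hnN hn1 (l.1, !l.2) b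
    refine ⟨v₁ ++ w ++ v₂, by simp [h1ne], ?_, ?_⟩
    · -- the chain condition
      have hA : (v₂ ++ [b]).Chain' (fun x y => y ≠ (x.1, !x.2)) := by
        refine h2ch.append (List.isChain_singleton _) ?_
        intro x hx y hy
        simp only [List.head?_cons, Option.mem_some_iff] at hy
        subst hy
        rw [h2l] at hx
        simp only [Option.mem_some_iff] at hx
        subst hx
        intro hb
        apply h22
        rw [hb]
        simp
      have hB : (w ++ (v₂ ++ [b])).Chain' (fun x y => y ≠ (x.1, !x.2)) := by
        refine hwch.append hA ?_
        intro x hx y hy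
        rw [List.getLast?_eq_getLast hwne] at hx
        simp only [Option.mem_some_iff] at hx
        subst hx
        rw [List.head?_append, h2h] at hy
        simp only [Option.or_some, Option.some_or, Option.mem_some_iff] at hy
        subst hy
        exact h21
      have hC : (v₁ ++ (w ++ (v₂ ++ [b]))).Chain' (fun x y => y ≠ (x.1, !x.2)) := by
        refine h1ch.append hB ?_
        intro x hx y hy
        rw [h1l] at hx
        simp only [Option.mem_some_iff] at hx
        subst hx
        rw [List.head?_append, hw] at hy
        simp only [List.head?_cons, Option.or_some, Option.some_or, Option.mem_some_iff] at hy
        subst hy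
        intro hb
        apply h12
        rw [hb]
        simp
      have hhead : (v₁ ++ (w ++ (v₂ ++ [b]))).head? = some c₁ := by
        rw [List.head?_append, h1h]
        rfl
      have : (a :: (v₁ ++ (w ++ (v₂ ++ [b])))).Chain' (fun x y => y ≠ (x.1, !x.2)) := by
        rw [List.Chain', List.isChain_cons]
        refine ⟨?_, hC⟩
        intro y hy
        rw [hhead] at hy
        simp only [Option.mem_some_iff] at hy
        subst hy
        exact h11
      simpa [List.append_assoc] using this
    · -- the coset condition
      rw [prod_map_mk, ← FreeGroup.mul_mk, ← FreeGroup.mul_mk]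
      have e1 : (QuotientGroup.mk (FreeGroup.mk v₁) : FreeGroup (Fin d) ⧸ N) = 1 :=
        (QuotientGroup.eq_one_iff _).mpr h1N
      have e2 : (QuotientGroup.mk (FreeGroup.mk v₂) : FreeGroup (Fin d) ⧸ N) = 1 :=
        (QuotientGroup.eq_one_iff _).mpr h2N
      rw [QuotientGroup.mk_mul, QuotientGroup.mk_mul, e1, e2, hwmk]
      simp
end

section
/- Let Φ be a conformal graph directed Markov system associated to the free group F_d (d ≥ 2) and let N be a non-trivial normal subgroup of F_d. Then the exponent of convergence δ_N := inf{u ∈ ℝ : Σ_{ω∈N} e^{u S_ω ζ} < ∞} is strictly positive, where ζ is the geometric potential of Φ. -/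
namespace Stmt15

/-- Letters: the symmetric generating set `{g_1^{±1},…,g_d^{±1}}` of the free group. -/
abbrev Letter (d : ℕ) := Fin d × Bool

/-- Formal inverse of a letter. -/
def linv {d : ℕ} (x : Letter d) : Letter d := (x.1, !x.2)

/-- The element of the free group represented by a letter. -/
def toG {d : ℕ} (x : Letter d) : FreeGroup (Fin d) := FreeGroup.mk [x]

/-- The element of the free group represented by a finite word. -/
def prodL {d : ℕ} (l : List (Letter d)) : FreeGroup (Fin d) := (l.map toG).prod

/-- A finite word is reduced. -/
def Red {d : ℕ} (l : List (Letter d)) : Prop := l.Chain' fun a b => b ≠ linv a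

/-- An infinite word is reduced (i.e. lies in the shift space Σ). -/
def Adm {d : ℕ} (τ : ℕ → Letter d) : Prop := ∀ n, τ (n + 1) ≠ linv (τ n)

/-- The cylinder set of a finite word in Σ. -/
def Cyl {d : ℕ} (l : List (Letter d)) : Set (ℕ → Letter d) :=
  {τ | Adm τ ∧ ∀ i, (h : i < l.length) → τ i = l.get ⟨i, h⟩}

/-- Birkhoff (ergodic) sum `S_n f(τ)`. -/
def birk {d : ℕ} (f : (ℕ → Letter d) → ℝ) (n : ℕ) (τ : ℕ → Letter d) : ℝ :=
  ∑ i ∈ Finset.range n, f fun k => τ (k + i)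

/-- `S_ω f := sup_{τ ∈ [ω]} S_{|ω|} f(τ)`. -/
noncomputable def Sw {d : ℕ} (f : (ℕ → Letter d) → ℝ) (l : List (Letter d)) : ℝ :=
  sSup {y | ∃ τ ∈ Cyl l, y = birk f l.length τ}

/-- `S_ω f` for a group element `ω ∈ F_d`, via its reduced word. -/
noncomputable def Sx {d : ℕ} (f : (ℕ → Letter d) → ℝ) (x : FreeGroup (Fin d)) : ℝ :=
  Sw f x.toWord

/-- Hölder continuity on Σ with respect to some metric `d_α`. -/
def Holder {d : ℕ} (f : (ℕ → Letter d) → ℝ) : Prop :=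
  ∃ α > (0 : ℝ), ∃ V : ℝ, ∀ n : ℕ, 1 ≤ n → ∀ τ τ' : ℕ → Letter d, Adm τ → Adm τ' →
    (∀ i < n, τ i = τ' i) → |f τ - f τ'| ≤ V * Real.exp (-α * n)

/-- `ζ` qualifies as the geometric potential of a conformal GDMS associated to `F_d`:
it is Hölder continuous and bounded above by `log s` for some contraction ratio
`0 < s < 1` (so that `sup ζ < 0`). -/
def GeomPot {d : ℕ} (ζ : (ℕ → Letter d) → ℝ) : Prop :=
  Holder ζ ∧ ∃ s : ℝ, 0 < s ∧ s < 1 ∧ ∀ τ, ζ τ ≤ Real.log s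


set_option maxHeartbeats 1000000

variable {d : ℕ}

lemma linv_linv (x : Letter d) : linv (linv x) = x := by simp [linv]

lemma linv_ne_self (x : Letter d) : linv x ≠ x := by
  simp [linv, Prod.ext_iff]

lemma ne_linv_self (x : Letter d) : x ≠ linv x := (linv_ne_self x).symm

lemma linv_inj : Function.Injective (linv (d := d)) :=
  Function.LeftInverse.injective linv_linv

lemma prodL_eq_mk (l : List (Letter d)) : prodL l = FreeGroup.mk l := by
  induction l with
  | nil => rfl
  | cons x t ih =>
    show toG x * prodL t = _
    rw [ih, toG, FreeGroup.mul_mk]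
    rfl

/-- A chain'-reduced word is fixed by `FreeGroup.reduce`. -/
lemma reduce_eq_self {l : List (Letter d)} (h : Red l) : FreeGroup.reduce l = l := by
  induction l with
  | nil => rfl
  | cons x t ih =>
    have ht : Red t := h.tail
    rw [FreeGroup.reduce.cons, ih ht]
    cases t with
    | nil => rfl
    | cons y s =>
      have hxy : y ≠ linv x := (List.isChain_cons_cons.1 h).1
      have : ¬(x.1 = y.1 ∧ x.2 = !y.2) := by
        rintro ⟨h1, h2⟩
        exact hxy (by simp [linv, Prod.ext_iff, h1, h2])
      simp [this]

lemma toWord_prodL {l : List (Letter d)} (h : Red l) : (prodL l).toWord = l := by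
  rw [prodL_eq_mk, FreeGroup.toWord_mk, reduce_eq_self h]

lemma red_reduce (l : List (Letter d)) : Red (FreeGroup.reduce l) := by
  induction l with
  | nil => exact List.isChain_nil
  | cons x t ih =>
    rw [FreeGroup.reduce.cons]
    cases h : FreeGroup.reduce t with
    | nil => simp [Red]; exact List.isChain_singleton _
    | cons y s =>
      rw [h] at ih
      show Red (if x.1 = y.1 ∧ x.2 = !y.2 then s else x :: y :: s)
      by_cases hc : x.1 = y.1 ∧ x.2 = !y.2
      · rw [if_pos hc]; exact ih.tail
      · rw [if_neg hc]
        refine List.isChain_cons_cons.2 ⟨?_, ih⟩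
        intro hxy
        exact hc (by rw [hxy]; exact ⟨rfl, by simp [linv]⟩)

lemma red_toWord (x : FreeGroup (Fin d)) : Red x.toWord := by
  have := red_reduce (d := d) x.toWord
  rwa [FreeGroup.reduce_toWord] at this

lemma invRev_eq (l : List (Letter d)) : FreeGroup.invRev l = (l.map linv).reverse := rfl

lemma prodL_append (l₁ l₂ : List (Letter d)) :
    prodL (l₁ ++ l₂) = prodL l₁ * prodL l₂ := by
  simp [prodL_eq_mk, FreeGroup.mul_mk]

lemma prodL_invRev (l : List (Letter d)) :
    prodL ((l.map linv).reverse) = (prodL l)⁻¹ := by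
  rw [prodL_eq_mk, prodL_eq_mk, ← invRev_eq, FreeGroup.inv_mk]


/-- Extension of a finite reduced word to an admissible infinite word. -/
noncomputable def ext (x0 : Letter d) (l : List (Letter d)) : ℕ → Letter d :=
  fun i => if h : i < l.length then l.get ⟨i, h⟩ else l.getLastD x0

lemma adm_ext (x0 : Letter d) {l : List (Letter d)} (hl : Red l) : Adm (ext x0 l) := by
  intro n
  unfold ext
  by_cases h1 : n + 1 < l.length
  · have h0 : n < l.length := by omega
    rw [dif_pos h1, dif_pos h0]
    have := List.isChain_iff_getElem.1 hl n (by omega)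
    simpa using this
  · by_cases h0 : n < l.length
    · -- n = l.length - 1; getLastD = get n
      have hn : n = l.length - 1 := by omega
      have hne : l ≠ [] := by intro h; rw [h] at h0; simp at h0
      rw [dif_neg h1, dif_pos h0]
      have h2 : l.getLastD x0 = l.getLast hne := by
        rw [List.getLastD_eq_getLast?, List.getLast?_eq_getLast hne]; rfl
      rw [h2, List.getLast_eq_getElem]
      have h3 : l.length - 1 = n := by omega
      simp_rw [h3]
      rw [List.get_eq_getElem]
      exact ne_linv_self _
    · rw [dif_neg h1, dif_neg h0]
      exact ne_linv_self _

lemma ext_mem_cyl (x0 : Letter d) {l : List (Letter d)} (hl : Red l) :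
    ext x0 l ∈ Cyl l := by
  refine ⟨adm_ext x0 hl, fun i h => ?_⟩
  simp [ext, h]

lemma adm_shift {τ : ℕ → Letter d} (h : Adm τ) (i : ℕ) : Adm fun k => τ (k + i) := by
  intro n
  simpa [Nat.add_right_comm] using h (n + i)

lemma birk_le {ζ : (ℕ → Letter d) → ℝ} {s : ℝ} (hs : ∀ τ, ζ τ ≤ Real.log s)
    (n : ℕ) (τ : ℕ → Letter d) : birk ζ n τ ≤ n * Real.log s := by
  calc birk ζ n τ ≤ ∑ _i ∈ Finset.range n, Real.log s :=
        Finset.sum_le_sum fun i _ => hs _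
    _ = n * Real.log s := by simp

lemma birk_ge {ζ : (ℕ → Letter d) → ℝ} {M : ℝ} (hb : ∀ τ, Adm τ → -M ≤ ζ τ)
    (n : ℕ) {τ : ℕ → Letter d} (hτ : Adm τ) : -(n * M) ≤ birk ζ n τ := by
  calc -(n * M) = ∑ _i ∈ Finset.range n, (-M) := by simp [mul_comm]
    _ ≤ birk ζ n τ := Finset.sum_le_sum fun i _ => hb _ (adm_shift hτ i)

lemma Sw_le {ζ : (ℕ → Letter d) → ℝ} {s : ℝ} (hs : ∀ τ, ζ τ ≤ Real.log s)
    {l : List (Letter d)} (hl : Red l) (x0 : Letter d) :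
    Sw ζ l ≤ l.length * Real.log s := by
  apply csSup_le
  · exact ⟨_, ⟨ext x0 l, ext_mem_cyl x0 hl, rfl⟩⟩
  · rintro y ⟨τ, _, rfl⟩
    exact birk_le hs _ _

lemma Sw_bddAbove {ζ : (ℕ → Letter d) → ℝ} {s : ℝ} (hs : ∀ τ, ζ τ ≤ Real.log s)
    (l : List (Letter d)) :
    BddAbove {y | ∃ τ ∈ Cyl l, y = birk ζ l.length τ} := by
  refine ⟨l.length * Real.log s, ?_⟩
  rintro y ⟨τ, _, rfl⟩
  exact birk_le hs _ _

lemma Sw_ge {ζ : (ℕ → Letter d) → ℝ} {s M : ℝ} (hs : ∀ τ, ζ τ ≤ Real.log s)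
    (hb : ∀ τ, Adm τ → -M ≤ ζ τ) {l : List (Letter d)} (hl : Red l) (x0 : Letter d) :
    -(l.length * M) ≤ Sw ζ l := by
  refine le_csSup (Sw_bddAbove hs l) ⟨ext x0 l, ext_mem_cyl x0 hl, rfl⟩ |>.trans' ?_
  exact birk_ge hb _ (adm_ext x0 hl)

lemma adm_const (x : Letter d) : Adm (fun _ => x) := fun _ => ne_linv_self x

/-- A Hölder function is bounded below on admissible sequences. -/
lemma exists_lb (hd : 1 ≤ d) {ζ : (ℕ → Letter d) → ℝ} (hH : Holder ζ) :
    ∃ M : ℝ, 0 ≤ M ∧ ∀ τ, Adm τ → -M ≤ ζ τ := by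
  obtain ⟨α, hα, V, hV⟩ := hH
  have hne : (Finset.univ : Finset (Letter d)).Nonempty := by
    refine ⟨(⟨0, by omega⟩, true), Finset.mem_univ _⟩
  set C := (Finset.univ : Finset (Letter d)).sup' hne (fun x => |ζ (fun _ => x)|) with hC
  have hVpos : 0 ≤ V * Real.exp (-α * (1 : ℕ)) := by
    have := hV 1 le_rfl (fun _ => (⟨0, by omega⟩, true)) (fun _ => (⟨0, by omega⟩, true))
      (adm_const _) (adm_const _) (fun i _ => rfl)
    simpa using this.trans' (abs_nonneg _)
  have hC0 : 0 ≤ C :=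
    le_trans (abs_nonneg _)
      (Finset.le_sup' (fun x : Letter d => |ζ (fun _ => x)|) (Finset.mem_univ (⟨0, by omega⟩, true)))
  refine ⟨C + V * Real.exp (-α * (1 : ℕ)), by positivity, fun τ hτ => ?_⟩
  have h1 := hV 1 le_rfl τ (fun _ => τ 0) hτ (adm_const _) (fun i hi => by
    interval_cases i
    rfl)
  have h2 : |ζ (fun _ => τ 0)| ≤ C :=
    Finset.le_sup' (fun x : Letter d => |ζ (fun _ => x)|) (Finset.mem_univ (τ 0))
  have := abs_sub_abs_le_abs_sub (ζ (fun _ => τ 0)) (ζ τ)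
  -- ζ τ ≥ ζ const - V exp ≥ -C - Vexp
  have h3 : ζ (fun _ => τ 0) - ζ τ ≤ V * Real.exp (-α * (1:ℕ)) := by
    have := h1
    rw [abs_sub_comm] at this
    exact (le_abs_self _).trans this
  have h4 : -C ≤ ζ (fun _ => τ 0) := neg_le_of_abs_le h2
  linarith

/-- Choice of a letter avoiding two given letters (needs `2 ≤ d`). -/
lemma exists_r (hd : 2 ≤ d) (f l : Letter d) : ∃ r : Letter d, r ≠ linv f ∧ r ≠ l := by
  by_contra hcon
  push_neg at hcon
  set a : Letter d := (⟨0, by omega⟩, true) with ha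
  set b : Letter d := (⟨1, by omega⟩, true) with hb
  set e : Letter d := (⟨0, by omega⟩, false) with he
  have hab : a ≠ b := by simp [ha, hb, Prod.ext_iff, Fin.ext_iff]
  have hae : a ≠ e := by simp [ha, he, Prod.ext_iff]
  have hbe : b ≠ e := by simp [hb, he, Prod.ext_iff, Fin.ext_iff]
  by_cases haf : a = linv f
  · by_cases hbf : b = linv f
    · exact hab (haf.trans hbf.symm)
    · have hbl := hcon b hbf
      by_cases hef : e = linv f
      · exact hae (haf.trans hef.symm)
      · exact hbe (hbl.symm ▸ (hcon e hef) ▸ rfl)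
  · have hal := hcon a haf
    by_cases hbf : b = linv f
    · by_cases hef : e = linv f
      · exact hbe (hbf.trans hef.symm)
      · exact hae (hal.symm ▸ (hcon e hef) ▸ rfl)
    · exact hab (hal.trans (hcon b hbf).symm)

/-- Words all of whose letters have the same sign are reduced. -/
lemma red_of_const_sign {c : Bool} {L : List (Letter d)} (h : ∀ x ∈ L, x.2 = c) : Red L := by
  induction L with
  | nil => exact List.isChain_nil
  | cons x t ih =>
    cases t with
    | nil => simp [Red]; exact List.isChain_singleton _
    | cons y s =>
      refine List.isChain_cons_cons.2 ⟨?_, ih (fun z hz => h z (List.mem_cons_of_mem _ hz))⟩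
      intro hy
      have h1 : y.2 = c := h y (by simp)
      have h2 : x.2 = c := h x (by simp)
      rw [hy] at h1
      simp [linv, h2] at h1

lemma summable_lists {r : ℝ} (hr0 : 0 ≤ r) (hr : (2 * d : ℝ) * r < 1) :
    Summable (fun l : List (Letter d) => r ^ l.length) := by
  have hcard : ∀ n : ℕ, (Nat.card (Fin n → Letter d) : ℝ) = (2 * d : ℝ) ^ n := by
    intro n
    rw [Nat.card_eq_fintype_card, Fintype.card_fun]
    push_cast
    simp [Fintype.card_prod, mul_comm]
  have hsig : Summable (fun p : Σ n : ℕ, (Fin n → Letter d) => r ^ p.1) := by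
    rw [summable_sigma_of_nonneg (fun p => pow_nonneg hr0 _)]
    constructor
    · intro n
      exact Summable.of_finite
    · have : Summable (fun n : ℕ => ((2 * d : ℝ) * r) ^ n) :=
        summable_geometric_of_lt_one (by positivity) hr
      refine this.congr fun n => ?_
      dsimp only
      rw [tsum_const, nsmul_eq_mul, hcard, mul_pow]
  have hinj : Function.Injective
      (fun l : List (Letter d) => (⟨l.length, l.get⟩ : Σ n : ℕ, (Fin n → Letter d))) := by
    intro l1 l2 h
    obtain ⟨h1, h2⟩ := Sigma.mk.inj_iff.1 h
    refine List.ext_get h1 fun i hi1 hi2 => ?_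
    have := (Fin.heq_fun_iff h1).1 h2 ⟨i, hi1⟩
    simpa using this
  exact hsig.comp_injective hinj

lemma exists_family (hd : 2 ≤ d) (N : Subgroup (FreeGroup (Fin d))) [hNn : N.Normal]
    (hN : N ≠ ⊥) :
    ∃ K : ℕ, ∀ n : ℕ, ∃ F : Finset N, F.card = 2 ^ n ∧
      ∀ x ∈ F, ((x : FreeGroup (Fin d)).toWord).length = 2 * n + 2 + K := by
  obtain ⟨w0, hw0⟩ := Subgroup.ne_bot_iff_exists_ne_one.1 hN
  set w : FreeGroup (Fin d) := (w0 : FreeGroup (Fin d)) with hwdef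
  have hwN : w ∈ N := w0.2
  have hw1 : w ≠ 1 := fun h => hw0 (Subtype.ext h)
  set W : List (Letter d) := w.toWord with hW
  have hWred : Red W := red_toWord w
  have hWne : W ≠ [] := fun h => hw1 (FreeGroup.toWord_eq_nil_iff.1 h)
  obtain ⟨a, T, hWaT⟩ := List.exists_cons_of_ne_nil hWne
  obtain ⟨r, hr1, hr2⟩ := exists_r hd a (W.getLast hWne)
  refine ⟨W.length, fun n => ?_⟩
  set p : Letter d := (⟨0, by omega⟩, r.2) with hp
  set q : Letter d := (⟨1, by omega⟩, r.2) with hq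
  have hpq : p ≠ q := by simp [hp, hq, Prod.ext_iff, Fin.ext_iff]
  set A : (Fin n → Bool) → List (Letter d) := fun b => List.ofFn (fun i => if b i then p else q)
    with hA
  set g : (Fin n → Bool) → List (Letter d) := fun b => A b ++ [r] with hg
  have hgsign : ∀ b, ∀ x ∈ g b, x.2 = r.2 := by
    intro b x hx
    rcases List.mem_append.1 hx with hx | hx
    · obtain ⟨i, rfl⟩ := List.mem_ofFn.1 hx
      by_cases hbi : b i <;> simp [hbi, hp, hq]
    · simp only [List.mem_singleton] at hx
      rw [hx]
  have hgred : ∀ b, Red (g b) := fun b => red_of_const_sign (hgsign b)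
  have hglast : ∀ b, (g b).getLast? = some r := fun b => List.getLast?_concat
  set rv : (Fin n → Bool) → List (Letter d) := fun b => ((g b).map linv).reverse with hrv
  have hrvsign : ∀ b, ∀ x ∈ rv b, x.2 = !r.2 := by
    intro b x hx
    rw [hrv] at hx
    simp only [List.mem_reverse, List.mem_map] at hx
    obtain ⟨y, hy, rfl⟩ := hx
    simp [linv, hgsign b y hy]
  set Wb : (Fin n → Bool) → List (Letter d) := fun b => g b ++ (W ++ rv b) with hWb
  have hWbred : ∀ b, Red (Wb b) := by
    intro b
    refine (hgred b).append ?_ ?_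
    · -- Red (W ++ rv b)
      refine hWred.append (red_of_const_sign (hrvsign b)) ?_
      intro x hx y hy
      rw [List.getLast?_eq_getLast hWne, Option.mem_def, Option.some_inj] at hx
      have hy' : y = linv r := by
        rw [hrv] at hy
        simp only [List.head?_reverse] at hy
        rw [hg, List.map_append] at hy
        simp only [List.map_cons, List.map_nil, List.getLast?_concat, Option.mem_def,
          Option.some_inj] at hy
        exact hy.symm
      rw [hy', ← hx]
      intro hc
      have : r = W.getLast hWne := by
        have := congrArg linv hc
        rwa [linv_linv, linv_linv] at this
      exact hr2 this
    · -- junction g b → (W ++ rv b)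
      intro x hx y hy
      rw [hglast b, Option.mem_def, Option.some_inj] at hx
      have hy' : y = a := by
        rw [hWaT] at hy
        simp only [List.cons_append, List.head?_cons, Option.mem_def, Option.some_inj] at hy
        exact hy.symm
      rw [hy', ← hx]
      intro hc
      have h5 : linv a = r := by
        have := congrArg linv hc
        rwa [linv_linv] at this
      exact hr1 h5.symm
  -- the group elements
  set X : (Fin n → Bool) → FreeGroup (Fin d) := fun b => prodL (Wb b) with hX
  have hXeq : ∀ b, X b = prodL (g b) * w * (prodL (g b))⁻¹ := by
    intro b
    have h1 : prodL W = w := by rw [prodL_eq_mk, hW, FreeGroup.mk_toWord]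
    have h2 : prodL (rv b) = (prodL (g b))⁻¹ := prodL_invRev (g b)
    calc X b = prodL (g b) * (prodL W * prodL (rv b)) := by
          rw [hX]
          show prodL (g b ++ (W ++ rv b)) = _
          rw [prodL_append, prodL_append, prodL_append]
        _ = _ := by rw [h1, h2, mul_assoc]
  have hXN : ∀ b, X b ∈ N := by
    intro b
    rw [hXeq b]
    exact hNn.conj_mem w hwN (prodL (g b))
  have hXword : ∀ b, (X b).toWord = Wb b := fun b => toWord_prodL (hWbred b)
  have hXlen : ∀ b, (X b).toWord.length = 2 * n + 2 + W.length := by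
    intro b
    rw [hXword b]
    show (g b ++ (W ++ ((g b).map linv).reverse)).length = _
    have hglen : (g b).length = n + 1 := by
      show (A b ++ [r]).length = n + 1
      simp [hA]
    simp only [hg, hA, List.length_append, List.length_reverse, List.length_map,
      List.length_ofFn, List.length_singleton]
    omega
  have hXinj : Function.Injective X := by
    intro b b' hbb
    have h1 : Wb b = Wb b' := by rw [← hXword b, ← hXword b', hbb]
    rw [hWb] at h1
    have h2 : g b = g b' := by
      have hlen : (g b).length = (g b').length := by
        rw [hg]
        show (A b ++ [r]).length = (A b' ++ [r]).length
        simp [hA]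
      exact List.append_inj_left h1 hlen
    rw [hg] at h2
    have h3 : A b = A b' := by
      have hlen : (A b).length = (A b').length := by simp [hA]
      exact List.append_inj_left h2 hlen
    rw [hA] at h3
    have h4 := List.ofFn_injective h3
    funext i
    have := congrFun h4 i
    by_cases hb : b i <;> by_cases hb' : b' i <;>
      simp only [hb, hb', if_true, if_false] at this ⊢
    · exact absurd this hpq
    · exact absurd this.symm hpq
  refine ⟨Finset.image (fun b => (⟨X b, hXN b⟩ : N)) Finset.univ, ?_, ?_⟩
  · rw [Finset.card_image_of_injective _ (fun b b' h => hXinj (congrArg Subtype.val h))]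
    simp
  · intro x hx
    obtain ⟨b, -, rfl⟩ := Finset.mem_image.1 hx
    exact hXlen b


/- STATEMENT 15: For a conformal GDMS associated to F_d (d ≥ 2) with geometric
potential ζ and a non-trivial normal subgroup N of F_d, the exponent of convergence
δ_N = inf{u : Σ_{ω ∈ N} e^{u S_ω ζ} < ∞} is strictly positive. -/
theorem stmt15 (d : ℕ) (hd : 2 ≤ d)
    (ζ : (ℕ → Letter d) → ℝ) (hζ : GeomPot ζ)
    (N : Subgroup (FreeGroup (Fin d))) [N.Normal] (hN : N ≠ ⊥) :
    0 < sInf {u : ℝ | Summable fun x : N => Real.exp (u * Sx ζ (x : FreeGroup (Fin d)))} := by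
  obtain ⟨hH, s, hs0, hs1, hsle⟩ := hζ
  have hlogs : Real.log s < 0 := Real.log_neg hs0 hs1
  have x0 : Letter d := (⟨0, by omega⟩, true)
  obtain ⟨M, hM0, hMlb⟩ := exists_lb (by omega) hH
  set M' : ℝ := M + 1 with hM'
  have hM'pos : (0:ℝ) < M' := by linarith
  have hMlb' : ∀ τ, Adm τ → -M' ≤ ζ τ := fun τ h => le_trans (by linarith) (hMlb τ h)
  set S := {u : ℝ | Summable fun x : N => Real.exp (u * Sx ζ (x : FreeGroup (Fin d)))} with hS
  have hSxle : ∀ x : FreeGroup (Fin d), Sx ζ x ≤ x.toWord.length * Real.log s :=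
    fun x => Sw_le hsle (red_toWord x) x0
  have hSxle0 : ∀ x : FreeGroup (Fin d), Sx ζ x ≤ 0 := by
    intro x
    refine (hSxle x).trans ?_
    apply mul_nonpos_of_nonneg_of_nonpos (by positivity) hlogs.le
  have hSxge : ∀ x : FreeGroup (Fin d), -(x.toWord.length * M') ≤ Sx ζ x :=
    fun x => Sw_ge hsle hMlb' (red_toWord x) x0
  have hd2 : (0:ℝ) < 2 * d := by positivity
  have hd2' : (1:ℝ) ≤ 2 * d := by
    have : (1:ℝ) ≤ (d:ℝ) := by exact_mod_cast (by omega : 1 ≤ d)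
    linarith
  -- Part A : S is nonempty
  set u₀ : ℝ := (Real.log (2 * d) + 1) / (-Real.log s) with hu₀
  have hu₀pos : 0 < u₀ := by
    apply div_pos
    · have := Real.log_nonneg hd2'
      linarith
    · linarith
  have hmem : u₀ ∈ S := by
    set r : ℝ := Real.exp (u₀ * Real.log s) with hr
    have hrpos : 0 < r := Real.exp_pos _
    have hexp : u₀ * Real.log s = -(Real.log (2 * d) + 1) := by
      have hne : Real.log s ≠ 0 := ne_of_lt hlogs
      rw [hu₀, div_mul_eq_mul_div, div_eq_iff (neg_ne_zero.2 hne)]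
      ring
    have h2dr : (2 * d : ℝ) * r < 1 := by
      rw [hr]
      calc (2 * d : ℝ) * Real.exp (u₀ * Real.log s)
          = Real.exp (Real.log (2 * d) + u₀ * Real.log s) := by
            rw [Real.exp_add, Real.exp_log hd2]
        _ = Real.exp (-1) := by rw [hexp]; ring_nf
        _ < 1 := Real.exp_lt_one_iff.2 (by norm_num)
    have hsum : Summable (fun x : N => r ^ ((x : FreeGroup (Fin d)).toWord.length)) :=
      (summable_lists hrpos.le h2dr).comp_injective
        (FreeGroup.toWord_injective.comp Subtype.val_injective)
    refine Summable.of_nonneg_of_le (fun x => (Real.exp_pos _).le) (fun x => ?_) hsum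
    have h1 : u₀ * Sx ζ (x : FreeGroup (Fin d)) ≤
        u₀ * (((x : FreeGroup (Fin d)).toWord.length : ℝ) * Real.log s) :=
      mul_le_mul_of_nonneg_left (hSxle _) hu₀pos.le
    calc Real.exp (u₀ * Sx ζ (x : FreeGroup (Fin d)))
        ≤ Real.exp (u₀ * (((x : FreeGroup (Fin d)).toWord.length : ℝ) * Real.log s)) :=
          Real.exp_le_exp.2 h1
      _ = r ^ ((x : FreeGroup (Fin d)).toWord.length) := by
          rw [hr, ← Real.exp_nat_mul]
          congr 1
          ring
  -- Part B : lower bound for members of S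
  obtain ⟨K, hfam⟩ := exists_family hd N hN
  set c : ℝ := Real.log 2 / (2 * M') with hc
  have hcpos : 0 < c := div_pos (Real.log_pos one_lt_two) (by linarith)
  have hlb : ∀ u ∈ S, c ≤ u := by
    intro u hu
    by_contra hlt
    push_neg at hlt
    set v : ℝ := max u 0 with hv
    have hv0 : 0 ≤ v := le_max_right _ _
    have hvc : v < c := max_lt hlt hcpos
    have hterm : ∀ x : N,
        Real.exp (-(v * (M' * ((x : FreeGroup (Fin d)).toWord.length : ℝ)))) ≤
          Real.exp (u * Sx ζ (x : FreeGroup (Fin d))) := by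
      intro x
      apply Real.exp_le_exp.2
      rcases le_or_gt 0 u with h0 | h0
      · have hveq : v = u := max_eq_left h0
        rw [hveq]
        have h2 := hSxge (x : FreeGroup (Fin d))
        calc -(u * (M' * ((x : FreeGroup (Fin d)).toWord.length : ℝ)))
            = u * (-(((x : FreeGroup (Fin d)).toWord.length : ℝ) * M')) := by ring
          _ ≤ u * Sx ζ (x : FreeGroup (Fin d)) := mul_le_mul_of_nonneg_left h2 h0
      · have hveq : v = 0 := max_eq_right h0.le
        rw [hveq]
        have h9 : (0:ℝ) ≤ u * Sx ζ (x : FreeGroup (Fin d)) := by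
          nlinarith [hSxle0 (x : FreeGroup (Fin d))]
        simpa using h9
    set T : ℝ := ∑' x : N, Real.exp (u * Sx ζ (x : FreeGroup (Fin d))) with hT
    have hbig : ∀ n : ℕ,
        (2:ℝ) ^ n * Real.exp (-(v * (M' * (2 * n + 2 + K : ℕ)))) ≤ T := by
      intro n
      obtain ⟨F, hcard, hlen⟩ := hfam n
      have hle : ∑ x ∈ F, Real.exp (u * Sx ζ (x : FreeGroup (Fin d))) ≤ T :=
        Summable.sum_le_tsum F (fun x _ => (Real.exp_pos _).le) hu
      refine le_trans ?_ hle
      have hptwise : ∀ x ∈ F,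
          Real.exp (-(v * (M' * (2 * n + 2 + K : ℕ)))) ≤
            Real.exp (u * Sx ζ (x : FreeGroup (Fin d))) := by
        intro x hx
        have h3 := hterm x
        rw [hlen x hx] at h3
        exact h3
      calc (2:ℝ) ^ n * Real.exp (-(v * (M' * (2 * n + 2 + K : ℕ))))
          = ∑ _x ∈ F, Real.exp (-(v * (M' * (2 * n + 2 + K : ℕ)))) := by
            rw [Finset.sum_const, hcard]
            push_cast
            ring
        _ ≤ _ := Finset.sum_le_sum hptwise
    have hTpos : 0 < T := lt_of_lt_of_le (by positivity) (hbig 0)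
    have hlog : ∀ n : ℕ,
        (n : ℝ) * Real.log 2 - v * (M' * (2 * n + 2 + K : ℕ)) ≤ Real.log T := by
      intro n
      have h4 := Real.log_le_log (by positivity) (hbig n)
      rw [Real.log_mul (by positivity) (Real.exp_ne_zero _), Real.log_pow, Real.log_exp] at h4
      linarith [h4]
    set ε : ℝ := Real.log 2 - 2 * (v * M') with hε
    have hεpos : 0 < ε := by
      have h5 : v * (2 * M') < Real.log 2 := (lt_div_iff₀ (by linarith)).1 hvc
      rw [hε]
      linarith [h5]
    obtain ⟨n, hn⟩ := exists_nat_gt ((Real.log T + v * (M' * (2 + K))) / ε)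
    have h6 := hlog n
    have h7 : (n : ℝ) * ε ≤ Real.log T + v * (M' * (2 + K)) := by
      have hcast : ((2 * n + 2 + K : ℕ) : ℝ) = 2 * (n:ℝ) + 2 + K := by push_cast; ring
      rw [hcast] at h6
      rw [hε]
      nlinarith [h6]
    have h8 := (div_lt_iff₀ hεpos).1 hn
    linarith
  have hfin : c ≤ sInf S := le_csInf ⟨u₀, hmem⟩ hlb
  linarith


end Stmt15
end

section
/- Let Φ be a conformal GDMS associated to F_d (d ≥ 2), N a non-trivial normal subgroup of F_d, and Φ̃ the N-induced GDMS whose edges are the first-return words to N. If f: Σ_Φ → ℝ is Hölder continuous, then its induced version f̃: Σ_{Φ̃} → ℝ is Hölder continuous, and there is a constant C_f > 0 such that for every admissible word ω̃ of the induced system, S_{ι(ω̃)} f − C_f ≤ S_{ω̃} f̃ ≤ S_{ι(ω̃)} f, where ι is the canonical embedding of induced words into Σ_Φ* and S_ω f = sup_{τ∈[ω]} S_{|ω|}f(τ). -/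
namespace Stmt17

/-- Letters: the symmetric generating set `{g_1^{±1},…,g_d^{±1}}` of the free group. -/
abbrev Letter (d : ℕ) := Fin d × Bool

/-- Formal inverse of a letter. -/
def linv {d : ℕ} (x : Letter d) : Letter d := (x.1, !x.2)

/-- The element of the free group represented by a letter. -/
def toG {d : ℕ} (x : Letter d) : FreeGroup (Fin d) := FreeGroup.mk [x]

/-- The element of the free group represented by a finite word. -/
def prodL {d : ℕ} (l : List (Letter d)) : FreeGroup (Fin d) := (l.map toG).prod

/-- A finite word is reduced. -/
def Red {d : ℕ} (l : List (Letter d)) : Prop := l.Chain' fun a b => b ≠ linv a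

/-- An infinite word is reduced (i.e. lies in the shift space Σ). -/
def Adm {d : ℕ} (τ : ℕ → Letter d) : Prop := ∀ n, τ (n + 1) ≠ linv (τ n)

/-- The cylinder set of a finite word in Σ. -/
def Cyl {d : ℕ} (l : List (Letter d)) : Set (ℕ → Letter d) :=
  {τ | Adm τ ∧ ∀ i, (h : i < l.length) → τ i = l.get ⟨i, h⟩}

/-- Birkhoff (ergodic) sum `S_n f(τ)`. -/
def birk {d : ℕ} (f : (ℕ → Letter d) → ℝ) (n : ℕ) (τ : ℕ → Letter d) : ℝ :=
  ∑ i ∈ Finset.range n, f fun k => τ (k + i)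

/-- `S_ω f := sup_{τ ∈ [ω]} S_{|ω|} f(τ)`. -/
noncomputable def Sw {d : ℕ} (f : (ℕ → Letter d) → ℝ) (l : List (Letter d)) : ℝ :=
  sSup {y | ∃ τ ∈ Cyl l, y = birk f l.length τ}

/-- `S_ω f` for a group element `ω ∈ F_d`, via its reduced word. -/
noncomputable def Sx {d : ℕ} (f : (ℕ → Letter d) → ℝ) (x : FreeGroup (Fin d)) : ℝ :=
  Sw f x.toWord

/-- Hölder continuity on Σ with respect to some metric `d_α`. -/
def Holder {d : ℕ} (f : (ℕ → Letter d) → ℝ) : Prop :=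
  ∃ α > (0 : ℝ), ∃ V : ℝ, ∀ n : ℕ, 1 ≤ n → ∀ τ τ' : ℕ → Letter d, Adm τ → Adm τ' →
    (∀ i < n, τ i = τ' i) → |f τ - f τ'| ≤ V * Real.exp (-α * n)

/-- `ζ` qualifies as the geometric potential of a conformal GDMS associated to `F_d`:
it is Hölder continuous and bounded above by `log s` for some contraction ratio
`0 < s < 1` (so that `sup ζ < 0`). -/
def GeomPot {d : ℕ} (ζ : (ℕ → Letter d) → ℝ) : Prop :=
  Holder ζ ∧ ∃ s : ℝ, 0 < s ∧ s < 1 ∧ ∀ τ, ζ τ ≤ Real.log s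

/-- The edge set of the `N`-induced GDMS: reduced words representing elements of `N`
none of whose proper nonempty initial segments represents an element of `N`. -/
def IndEdges {d : ℕ} (N : Subgroup (FreeGroup (Fin d))) : Set (List (Letter d)) :=
  {l | l ≠ [] ∧ Red l ∧ prodL l ∈ N ∧
    ∀ k : ℕ, 0 < k → k < l.length → prodL (l.take k) ∉ N}

/-- The alphabet of the induced system. -/
abbrev IndEdge {d : ℕ} (N : Subgroup (FreeGroup (Fin d))) := {l : List (Letter d) // l ∈ IndEdges N}

/-- The infinite concatenation of a sequence of (nonempty) finite blocks. -/
def flattenSeq {d : ℕ} [NeZero d] (b : ℕ → List (Letter d)) : ℕ → Letter d :=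
  fun k => (List.ofFn fun i : Fin (k + 1) => b i).flatten.getD k default

/-- The canonical embedding `ι` on infinite induced sequences. -/
def ιseq {d : ℕ} [NeZero d] {N : Subgroup (FreeGroup (Fin d))}
    (τ : ℕ → IndEdge N) : ℕ → Letter d :=
  flattenSeq fun i => (τ i).val

/-- Admissibility in the induced system: the concatenation is a reduced sequence. -/
def AdmInd {d : ℕ} [NeZero d] {N : Subgroup (FreeGroup (Fin d))}
    (τ : ℕ → IndEdge N) : Prop := Adm (ιseq τ)

/-- The induced version `f̃` of `f`: `f̃(τ̃) = S_{|ι(τ̃₁)|} f (ι(τ̃))`. -/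
def indVer {d : ℕ} [NeZero d] {N : Subgroup (FreeGroup (Fin d))}
    (f : (ℕ → Letter d) → ℝ) (τ : ℕ → IndEdge N) : ℝ :=
  birk f (τ 0).val.length (ιseq τ)

/-- The canonical embedding `ι` on finite induced words. -/
def ιw {d : ℕ} {N : Subgroup (FreeGroup (Fin d))} (w : List (IndEdge N)) : List (Letter d) :=
  (w.map Subtype.val).flatten

/-- The cylinder of a finite induced word in the induced shift space. -/
def CylInd {d : ℕ} [NeZero d] {N : Subgroup (FreeGroup (Fin d))}
    (w : List (IndEdge N)) : Set (ℕ → IndEdge N) :=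
  {τ | AdmInd τ ∧ ∀ i, (h : i < w.length) → τ i = w.get ⟨i, h⟩}

/-- `S_{ω̃} F` for the induced system: sup over the induced cylinder of the induced
Birkhoff sum. -/
noncomputable def SwInd {d : ℕ} [NeZero d] {N : Subgroup (FreeGroup (Fin d))}
    (F : (ℕ → IndEdge N) → ℝ) (w : List (IndEdge N)) : ℝ :=
  sSup {y | ∃ τ ∈ CylInd w, y = ∑ i ∈ Finset.range w.length, F fun n => τ (n + i)}


/-! ### Auxiliary lemmas -/

section Aux
variable {d : ℕ}

lemma linv_linv (x : Letter d) : linv (linv x) = x := by simp [linv]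

lemma linv_inj {x y : Letter d} (h : linv x = linv y) : x = y := by
  rw [← linv_linv x, h, linv_linv]

lemma red_getElem {l : List (Letter d)} (hl : Red l) {i : ℕ} (h : i + 1 < l.length) :
    l[i+1] ≠ linv l[i] := by
  simp only [Red, List.Chain', List.isChain_iff_getElem] at hl
  exact hl i (by omega)

lemma red_toWord (g : FreeGroup (Fin d)) : Red g.toWord := by
  by_contra hc
  simp only [Red, List.Chain', List.isChain_iff_getElem] at hc
  push_neg at hc
  obtain ⟨i, hi, heq⟩ := hc
  have hd1 : i + 1 < g.toWord.length := by omega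
  have hdecomp : g.toWord = g.toWord.take i ++ (g.toWord[i].1, g.toWord[i].2) ::
      (g.toWord[i].1, !g.toWord[i].2) :: g.toWord.drop (i+2) := by
    have h1 : g.toWord.drop i = g.toWord[i] :: g.toWord.drop (i+1) :=
      List.drop_eq_getElem_cons (by omega)
    have h2 : g.toWord.drop (i+1) = g.toWord[i+1] :: g.toWord.drop (i+2) :=
      List.drop_eq_getElem_cons (by omega)
    have h3 : g.toWord[i+1] = (g.toWord[i].1, !g.toWord[i].2) := by
      simpa [List.get_eq_getElem, linv] using heq
    conv_lhs => rw [← List.take_append_drop i g.toWord, h1, h2, h3]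
  exact FreeGroup.reduce.not (x := g.toWord[i].1) (b := g.toWord[i].2)
    (L₁ := g.toWord) (by rw [FreeGroup.reduce_toWord]; exact hdecomp)

lemma prodL_eq_mk (l : List (Letter d)) : prodL l = FreeGroup.mk l := by
  induction l with
  | nil => simp [prodL]; rfl
  | cons a t ih =>
    rw [prodL, List.map_cons, List.prod_cons, ← prodL, ih, toG, FreeGroup.mul_mk]
    rfl

lemma toG_linv (a : Letter d) : toG (linv a) = (toG a)⁻¹ := by
  rw [toG, toG, FreeGroup.inv_mk, FreeGroup.invRev]
  simp [linv]

lemma exists_letter (hd : 2 ≤ d) (x y z : Letter d) :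
    ∃ a : Letter d, a ≠ x ∧ a ≠ y ∧ a ≠ z := by
  by_contra hc
  push_neg at hc
  have hsub : (Finset.univ : Finset (Letter d)) ⊆ {x, y, z} := by
    intro a _
    rcases eq_or_ne a x with h1 | h1
    · simp [h1]
    · rcases eq_or_ne a y with h2 | h2
      · simp [h2]
      · simp [hc a h1 h2]
  have h1 : Fintype.card (Letter d) ≤ 3 :=
    le_trans (Finset.card_le_card hsub) (by
      apply le_trans (Finset.card_insert_le _ _)
      apply Nat.succ_le_succ
      apply le_trans (Finset.card_insert_le _ _)
      simp)
  have h2 : Fintype.card (Letter d) = d * 2 := by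
    simp [Fintype.card_prod]
  omega

lemma exists_edge (hd : 2 ≤ d) (N : Subgroup (FreeGroup (Fin d))) [N.Normal]
    (hN : N ≠ ⊥) (z : Letter d) :
    ∃ l ∈ IndEdges N, ∀ y ∈ l.head?, y ≠ z := by
  obtain ⟨g, hgN, hg1⟩ : ∃ g, g ∈ N ∧ g ≠ 1 := by
    by_contra hc
    push_neg at hc
    refine hN ?_
    ext x
    simp only [Subgroup.mem_bot]
    exact ⟨hc x, by rintro rfl; exact N.one_mem⟩
  set u := g.toWord with hu
  have hune : u ≠ [] := by
    intro h
    exact hg1 (by rw [← FreeGroup.mk_toWord (x := g), ← hu, h]; rfl)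
  have hured : Red u := red_toWord g
  obtain ⟨a, haz, hah, hal⟩ := exists_letter hd z (linv (u.head hune)) (u.getLast hune)
  set v : List (Letter d) := a :: (u ++ [linv a]) with hv
  have hvred : Red v := by
    simp only [Red, List.Chain']
    rw [List.isChain_cons, List.isChain_append]
    refine ⟨?_, hured, ?_, ?_⟩
    · intro y hy
      rw [List.head?_append_of_ne_nil _ hune, List.head?_eq_head hune] at hy
      rw [Option.mem_def, Option.some_inj] at hy
      subst hy
      intro hcon
      exact hah (by rw [hcon, linv_linv])
    · exact List.isChain_singleton _
    · intro x hx y hy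
      rw [List.getLast?_eq_getLast hune] at hx
      have hx' : x = u.getLast hune := by
        rw [Option.mem_def, Option.some_inj] at hx
        exact hx.symm
      have hy' : y = linv a := by
        simp only [List.head?_cons, Option.mem_def, Option.some_inj] at hy
        exact hy.symm
      subst hx'; subst hy'
      intro hcon
      exact hal (linv_inj hcon)
  have hvN : prodL v ∈ N := by
    have h1 : FreeGroup.mk u = g := by rw [hu]; exact FreeGroup.mk_toWord
    have : prodL v = toG a * g * (toG a)⁻¹ := by
      rw [hv, prodL_eq_mk]
      have h2 : FreeGroup.mk (a :: (u ++ [linv a])) =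
          FreeGroup.mk [a] * (FreeGroup.mk u * FreeGroup.mk [linv a]) := by
        rw [FreeGroup.mul_mk, FreeGroup.mul_mk]
        rfl
      rw [h2, h1]
      show toG a * (g * toG (linv a)) = _
      rw [toG_linv, mul_assoc]
    rw [this]
    exact Subgroup.Normal.conj_mem ‹N.Normal› g hgN (toG a)
  have hvne : v ≠ [] := by simp [hv]
  have hP : ∃ k, 0 < k ∧ prodL (v.take k) ∈ N := by
    refine ⟨v.length, List.length_pos_iff.2 hvne, ?_⟩
    rw [List.take_length]
    exact hvN
  classical
  let k₀ := Nat.find hP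
  have hk₀ := Nat.find_spec hP
  have hk₀le : k₀ ≤ v.length :=
    Nat.find_min' hP ⟨List.length_pos_iff.2 hvne, by rw [List.take_length]; exact hvN⟩
  have hlen : (v.take k₀).length = k₀ := by
    rw [List.length_take]
    omega
  refine ⟨v.take k₀, ⟨?_, ?_, hk₀.2, ?_⟩, ?_⟩
  · intro h
    have := congrArg List.length h
    rw [hlen] at this
    simp at this
    omega
  · exact List.IsChain.take hvred _
  · intro k hk hk'
    rw [hlen] at hk'
    rw [List.take_take, min_eq_left (le_of_lt hk')]
    intro hmem
    exact Nat.find_min hP hk' ⟨hk, hmem⟩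
  · intro y hy
    obtain ⟨j, hj⟩ : ∃ j, k₀ = j + 1 := ⟨k₀ - 1, by omega⟩
    rw [hj, hv, List.take_succ_cons, List.head?_cons, Option.mem_def, Option.some_inj] at hy
    subst hy
    exact haz

end Aux

section Flatten
variable {d : ℕ} [NeZero d] {b b' : ℕ → List (Letter d)}

/-- flatten of the first `m` blocks -/
def Fb (b : ℕ → List (Letter d)) (m : ℕ) : List (Letter d) :=
  (List.ofFn fun i : Fin m => b i).flatten

omit [NeZero d] in
lemma Fb_succ (b : ℕ → List (Letter d)) (m : ℕ) : Fb b (m+1) = Fb b m ++ b m := by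
  rw [Fb, List.ofFn_succ', List.concat_eq_append, List.flatten_append]
  simp [Fb]

omit [NeZero d] in
lemma Fb_succ_front (b : ℕ → List (Letter d)) (m : ℕ) :
    Fb b (m+1) = b 0 ++ Fb (fun i => b (i+1)) m := by
  simp [Fb, List.ofFn_succ, Function.comp]

omit [NeZero d] in
lemma Fb_congr {m : ℕ} (h : ∀ i < m, b i = b' i) : Fb b m = Fb b' m := by
  exact congrArg List.flatten (congrArg List.ofFn (funext fun i => h i i.isLt))

omit [NeZero d] in
lemma Fb_prefix (b : ℕ → List (Letter d)) {m m' : ℕ} (h : m ≤ m') :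
    Fb b m <+: Fb b m' := by
  induction m', h using Nat.le_induction with
  | base => exact List.prefix_refl _
  | succ n hn ih => rw [Fb_succ]; exact ih.trans (List.prefix_append _ _)

omit [NeZero d] in
lemma length_Fb_ge (hb : ∀ i, b i ≠ []) (m : ℕ) : m ≤ (Fb b m).length := by
  induction m with
  | zero => simp
  | succ n ih =>
    rw [Fb_succ, List.length_append]
    have := List.length_pos_iff.2 (hb n)
    omega

lemma flattenSeq_eq (hb : ∀ i, b i ≠ []) {k m : ℕ} (h : k < (Fb b m).length) :
    flattenSeq b k = (Fb b m)[k] := by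
  have h1 : k < (Fb b (k+1)).length := lt_of_lt_of_le (Nat.lt_succ_self k) (length_Fb_ge hb _)
  have h2 : flattenSeq b k = (Fb b (k+1))[k] := by
    rw [flattenSeq]
    exact List.getD_eq_getElem _ _ h1
  rw [h2]
  rcases le_total m (k+1) with hm | hm
  · exact ((Fb_prefix b hm).getElem h).symm
  · exact (Fb_prefix b hm).getElem h1

lemma flattenSeq_shift (hb : ∀ i, b i ≠ []) (k : ℕ) :
    flattenSeq (fun i => b (i+1)) k = flattenSeq b (k + (b 0).length) := by
  have hb'' : ∀ i, (fun i => b (i+1)) i ≠ [] := fun i => hb (i+1)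
  have h1 : k < (Fb (fun i => b (i+1)) (k+1)).length :=
    lt_of_lt_of_le (Nat.lt_succ_self k) (length_Fb_ge hb'' _)
  have hlen : (Fb b (k+2)).length = (b 0).length + (Fb (fun i => b (i+1)) (k+1)).length := by
    rw [Fb_succ_front, List.length_append]
  have h2 : k + (b 0).length < (Fb b (k+2)).length := by omega
  rw [flattenSeq_eq hb'' h1, flattenSeq_eq hb h2]
  have h3 : ∀ (hh : k + (b 0).length < (b 0 ++ Fb (fun i => b (i+1)) (k+1)).length),
      (Fb b (k+2))[k + (b 0).length]'h2
        = (b 0 ++ Fb (fun i => b (i+1)) (k+1))[k + (b 0).length]'hh := by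
    intro hh
    congr 1
    exact Fb_succ_front b (k+1)
  rw [h3 (by rw [← Fb_succ_front]; exact h2), List.getElem_append_right (by omega)]
  congr 1
  omega

omit [NeZero d] in
lemma red_Fb (hb : ∀ i, b i ≠ []) (hr : ∀ i, Red (b i))
    (hj : ∀ i, ∀ x ∈ (b i).getLast?, ∀ y ∈ (b (i+1)).head?, y ≠ linv x) (m : ℕ) :
    Red (Fb b m) := by
  induction m with
  | zero => simp [Fb, Red, List.Chain']
  | succ n ih =>
    rw [Fb_succ, Red]
    simp only [List.Chain']
    rw [List.isChain_append]
    refine ⟨ih, hr n, ?_⟩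
    intro x hx y hy
    match n with
    | 0 => simp [Fb] at hx
    | k+1 =>
      rw [Fb_succ, List.getLast?_append, List.getLast?_eq_getLast (hb k)] at hx
      refine hj k x ?_ y hy
      rw [List.getLast?_eq_getLast (hb k)]
      exact hx

lemma adm_flattenSeq (hb : ∀ i, b i ≠ []) (hred : ∀ m, Red (Fb b m)) :
    Adm (flattenSeq b) := by
  intro n
  have hlen : n + 1 < (Fb b (n+2)).length :=
    lt_of_lt_of_le (by omega) (length_Fb_ge hb (n+2))
  rw [flattenSeq_eq hb hlen, flattenSeq_eq hb (show n < (Fb b (n+2)).length by omega)]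
  exact red_getElem (hred (n+2)) hlen

end Flatten

section Ind
variable {d : ℕ} [NeZero d] {N : Subgroup (FreeGroup (Fin d))}

omit [NeZero d] in
lemma joint_of_red {w : List (IndEdge N)} (hw : Red (ιw w)) {i : ℕ} (h : i + 1 < w.length) :
    ∀ x ∈ (w[i].val).getLast?, ∀ y ∈ (w[i+1].val).head?, y ≠ linv x := by
  have hwdec : w = w.take i ++ w[i] :: w[i+1] :: w.drop (i+2) := by
    conv_lhs => rw [← List.take_append_drop i w, List.drop_eq_getElem_cons (show i < w.length by omega),
      List.drop_eq_getElem_cons h]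
  have hinf : (w[i].val ++ w[i+1].val) <:+: ιw w := by
    refine ⟨ιw (w.take i), ιw (w.drop (i+2)), ?_⟩
    conv_rhs => rw [hwdec]
    simp only [ιw, List.map_append, List.map_cons, List.flatten_append, List.flatten_cons,
      List.append_assoc]
  have hred2 : Red (w[i].val ++ w[i+1].val) := List.IsChain.infix hw hinf
  simp only [Red, List.Chain'] at hred2
  rw [List.isChain_append] at hred2
  exact hred2.2.2

lemma iw_eq_Fb (w : List (IndEdge N)) (τ : ℕ → IndEdge N)
    (hτ : ∀ i, (h : i < w.length) → τ i = w.get ⟨i, h⟩) :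
    Fb (fun i => (τ i).val) w.length = ιw w := by
  have h1 : (List.ofFn fun i : Fin w.length => (τ i).val)
      = List.ofFn fun i : Fin w.length => (w.get i).val := by
    exact congrArg List.ofFn (funext fun i => by rw [hτ i i.isLt])
  rw [Fb, h1, show (fun i : Fin w.length => (w.get i).val)
      = Subtype.val ∘ (w.get) from rfl, ← List.map_ofFn, List.ofFn_get]
  rfl

lemma mem_Cyl_of_cylInd {w : List (IndEdge N)} {τ : ℕ → IndEdge N} (hτ : τ ∈ CylInd w) :
    ιseq τ ∈ Cyl (ιw w) := by
  obtain ⟨hadm, hcoord⟩ := hτ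
  refine ⟨hadm, ?_⟩
  intro i h
  have hb : ∀ j, (fun i => (τ i).val) j ≠ [] := fun j => (τ j).2.1
  have hFb : Fb (fun i => (τ i).val) w.length = ιw w := iw_eq_Fb w τ hcoord
  have h' : i < (Fb (fun i => (τ i).val) w.length).length := by rw [hFb]; exact h
  show flattenSeq (fun i => (τ i).val) i = _
  rw [flattenSeq_eq hb h']
  simp only [hFb]
  rw [List.get_eq_getElem]

lemma cylInd_nonempty (hd : 2 ≤ d) [N.Normal] (hN : N ≠ ⊥)
    (w : List (IndEdge N)) (hwne : w ≠ []) (hw : Red (ιw w)) :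
    ∃ τ, τ ∈ CylInd w := by
  classical
  have hpick : ∀ z : Letter d, ∃ l ∈ IndEdges N, ∀ y ∈ l.head?, y ≠ linv z :=
    fun z => exists_edge hd N hN (linv z)
  choose p hp1 hp2 using hpick
  let glast : IndEdge N → Letter d := fun e => e.val.getLast e.2.1
  let e : ℕ → IndEdge N := fun n => Nat.rec (motive := fun _ => IndEdge N)
    ⟨p (glast (w.getLast hwne)), hp1 _⟩
    (fun _ prev => ⟨p (glast prev), hp1 _⟩) n
  let τ : ℕ → IndEdge N := fun i => if h : i < w.length then w.get ⟨i, h⟩ else e (i - w.length)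
  have hτw : ∀ i, (h : i < w.length) → τ i = w.get ⟨i, h⟩ := fun i h => dif_pos h
  have hτe : ∀ i, w.length ≤ i → τ i = e (i - w.length) := fun i h => dif_neg (by omega)
  -- the key joint property of `p`
  have hjp : ∀ (E : IndEdge N), ∀ x ∈ E.val.getLast?, ∀ y ∈ (p (glast E)).head?, y ≠ linv x := by
    intro E x hx y hy
    rw [List.getLast?_eq_getLast E.2.1, Option.mem_def, Option.some_inj] at hx
    have : x = glast E := hx.symm
    subst this
    exact hp2 (glast E) y hy
  have hb : ∀ i, (fun i => (τ i).val) i ≠ [] := fun i => (τ i).2.1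
  have hr : ∀ i, Red ((τ i).val) := fun i => (τ i).2.2.1
  have hj : ∀ i, ∀ x ∈ ((τ i).val).getLast?, ∀ y ∈ ((τ (i+1)).val).head?, y ≠ linv x := by
    intro i
    rcases lt_trichotomy (i+1) w.length with hlt | heq | hgt
    · have h1 : τ i = w.get ⟨i, by omega⟩ := hτw i (by omega)
      have h2 : τ (i+1) = w.get ⟨i+1, hlt⟩ := hτw (i+1) hlt
      rw [h1, h2]
      simpa [List.get_eq_getElem] using joint_of_red hw hlt
    · have hiw : i < w.length := by omega
      have h1 : τ i = w.get ⟨i, hiw⟩ := hτw i hiw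
      have h2 : τ (i+1) = e 0 := by
        have hz : i + 1 - w.length = 0 := by omega
        rw [hτe (i+1) (by omega), hz]
      have h3 : w.get ⟨i, hiw⟩ = w.getLast hwne := by
        rw [List.getLast_eq_getElem, List.get_eq_getElem]
        congr 1
        show i = w.length - 1
        omega
      rw [h1, h2, h3]
      exact hjp (w.getLast hwne)
    · have h1 : τ i = e (i - w.length) := hτe i (by omega)
      have h2 : τ (i+1) = e ((i - w.length) + 1) := by
        have hz : i + 1 - w.length = (i - w.length) + 1 := by omega
        rw [hτe (i+1) (by omega), hz]
      rw [h1, h2]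
      exact hjp (e (i - w.length))
  refine ⟨τ, ?_, hτw⟩
  exact adm_flattenSeq hb (red_Fb hb hr hj)

omit [NeZero d] in
lemma adm_shift {τ : ℕ → Letter d} (h : Adm τ) (i : ℕ) : Adm fun k => τ (k + i) := by
  intro n
  show τ (n + 1 + i) ≠ linv (τ (n + i))
  rw [Nat.add_right_comm]
  exact h (n + i)

omit [NeZero d] in
lemma birk_add (f : (ℕ → Letter d) → ℝ) (p q : ℕ) (σ : ℕ → Letter d) :
    birk f (p + q) σ = birk f p σ + birk f q (fun k => σ (k + p)) := by
  rw [birk, birk, birk, Finset.sum_range_add]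
  congr 1
  refine Finset.sum_congr rfl fun i _ => ?_
  congr 1
  funext k
  congr 1
  omega

lemma birk_ind (f : (ℕ → Letter d) → ℝ) (w : List (IndEdge N)) :
    ∀ τ : ℕ → IndEdge N, (∀ i, (h : i < w.length) → τ i = w.get ⟨i, h⟩) →
    ∑ i ∈ Finset.range w.length, indVer f (fun n => τ (n + i)) =
      birk f (ιw w).length (ιseq τ) := by
  induction w with
  | nil => intro τ _; simp [ιw, birk]
  | cons a t ih =>
    intro τ hτ
    have hτ0 : τ 0 = a := hτ 0 (by simp)
    have hlen : (ιw (a :: t)).length = a.val.length + (ιw t).length := by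
      simp [ιw]
    rw [hlen, birk_add]
    have hshift : (fun k => ιseq τ (k + a.val.length)) = ιseq (fun n => τ (n + 1)) := by
      funext k
      have hbb : ∀ i, (fun i => (τ i).val) i ≠ [] := fun i => (τ i).2.1
      have hs := flattenSeq_shift hbb k
      rw [hτ0] at hs
      exact hs.symm
    rw [hshift]
    have h1 : indVer f (fun n => τ (n + 0)) = birk f a.val.length (ιseq τ) := by
      show indVer f τ = _
      rw [indVer, hτ0]
    have h2 : (∑ i ∈ Finset.range t.length, indVer f fun n => τ (n + (i+1))) =
        birk f (ιw t).length (ιseq fun n => τ (n + 1)) := by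
      refine ih (fun n => τ (n + 1)) (fun i h => ?_)
      show τ (i + 1) = t.get ⟨i, h⟩
      rw [hτ (i+1) (by simpa using Nat.succ_lt_succ h)]
      rfl
    calc ∑ i ∈ Finset.range (a :: t).length, indVer f (fun n => τ (n + i))
        = (∑ i ∈ Finset.range t.length, indVer f fun n => τ (n + (i+1)))
            + indVer f (fun n => τ (n + 0)) := Finset.sum_range_succ' _ _
      _ = birk f (ιw t).length (ιseq fun n => τ (n + 1)) + birk f a.val.length (ιseq τ) := by
          rw [h1, h2]
      _ = birk f a.val.length (ιseq τ) + birk f (ιw t).length (ιseq fun n => τ (n + 1)) :=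
          add_comm _ _

end Ind

section Dist
variable {d : ℕ}

lemma adm_const [NeZero d] :
    Adm (fun _ => ((⟨0, Nat.pos_of_ne_zero (NeZero.ne d)⟩ : Fin d), true) : ℕ → Letter d) := by
  intro n
  simp [linv]

lemma geom_bound {r : ℝ} (hr0 : 0 < r) (hr1 : r < 1) (n : ℕ) :
    ∑ j ∈ Finset.range n, r ^ j ≤ 1 / (1 - r) := by
  have h1 : (0:ℝ) < 1 - r := by linarith
  have hne1 : r - 1 ≠ 0 := by linarith
  have hne2 : 1 - r ≠ 0 := by linarith
  have key : (r^n - 1)/(r - 1) = (1 - r^n)/(1 - r) := by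
    rw [div_eq_div_iff hne1 hne2]; ring
  rw [geom_sum_eq (ne_of_lt hr1), key, div_le_div_iff₀ h1 h1]
  nlinarith [pow_pos hr0 n]

lemma birk_dist {f : (ℕ → Letter d) → ℝ} {α V : ℝ} (hα : 0 < α) (hV : 0 ≤ V)
    (hf : ∀ n : ℕ, 1 ≤ n → ∀ τ τ' : ℕ → Letter d, Adm τ → Adm τ' →
      (∀ i < n, τ i = τ' i) → |f τ - f τ'| ≤ V * Real.exp (-α * n))
    {σ₁ σ₂ : ℕ → Letter d} (h1 : Adm σ₁) (h2 : Adm σ₂) {M n : ℕ} (hnM : n ≤ M)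
    (hagree : ∀ i < M, σ₁ i = σ₂ i) :
    |birk f n σ₁ - birk f n σ₂| ≤
      V / (1 - Real.exp (-α)) * Real.exp (-α * ((M : ℝ) + 1 - n)) := by
  have hr0 : (0:ℝ) < Real.exp (-α) := Real.exp_pos _
  have hr1 : Real.exp (-α) < 1 := by
    rw [Real.exp_lt_one_iff]
    linarith
  have key : ∀ i < n, |f (fun k => σ₁ (k + i)) - f (fun k => σ₂ (k + i))| ≤
      V * Real.exp (-α * ((M - i : ℕ) : ℝ)) := by
    intro i hi
    exact hf (M - i) (by omega) _ _ (adm_shift h1 i) (adm_shift h2 i)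
      (fun j hj => hagree (j + i) (by omega))
  have habs : |birk f n σ₁ - birk f n σ₂| ≤
      ∑ i ∈ Finset.range n, V * Real.exp (-α * ((M - i : ℕ) : ℝ)) := by
    rw [birk, birk, ← Finset.sum_sub_distrib]
    refine (Finset.abs_sum_le_sum_abs _ _).trans ?_
    exact Finset.sum_le_sum fun i hi => key i (Finset.mem_range.1 hi)
  have hterm : ∀ i ∈ Finset.range n, V * Real.exp (-α * ((M - i : ℕ) : ℝ)) =
      V * Real.exp (-α * ((M:ℝ) + 1 - n)) * Real.exp (-α) ^ (n - 1 - i) := by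
    intro i hi
    rw [Finset.mem_range] at hi
    have hcast : ((M - i : ℕ) : ℝ) = (M : ℝ) - i := by
      rw [Nat.cast_sub (by omega)]
    have hcast2 : ((n - 1 - i : ℕ) : ℝ) = (n : ℝ) - 1 - i := by
      rw [Nat.cast_sub (by omega), Nat.cast_sub (by omega)]
      norm_num
    rw [hcast, ← Real.exp_nat_mul, mul_assoc, ← Real.exp_add]
    congr 2
    rw [hcast2]
    ring
  have hsum : ∑ i ∈ Finset.range n, V * Real.exp (-α * ((M - i : ℕ) : ℝ)) =
      V * Real.exp (-α * ((M:ℝ) + 1 - n)) * ∑ j ∈ Finset.range n, Real.exp (-α) ^ j := by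
    rw [Finset.sum_congr rfl hterm, ← Finset.mul_sum]
    congr 1
    exact Finset.sum_range_reflect (fun j => Real.exp (-α) ^ j) n
  refine habs.trans ?_
  rw [hsum]
  have hVe : 0 ≤ V * Real.exp (-α * ((M:ℝ) + 1 - n)) :=
    mul_nonneg hV (le_of_lt (Real.exp_pos _))
  calc V * Real.exp (-α * ((M:ℝ) + 1 - n)) * ∑ j ∈ Finset.range n, Real.exp (-α) ^ j
      ≤ V * Real.exp (-α * ((M:ℝ) + 1 - n)) * (1 / (1 - Real.exp (-α))) :=
        mul_le_mul_of_nonneg_left (geom_bound hr0 hr1 n) hVe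
    _ = V / (1 - Real.exp (-α)) * Real.exp (-α * ((M:ℝ) + 1 - n)) := by
        ring

end Dist

/- STATEMENT 17: If `f : Σ_Φ → ℝ` is Hölder continuous, then its induced version
`f̃ : Σ_{Φ̃} → ℝ` is Hölder continuous, and there is a constant `C_f > 0` such that for
every admissible word `ω̃` of the induced system,
`S_{ι(ω̃)} f − C_f ≤ S_{ω̃} f̃ ≤ S_{ι(ω̃)} f`. -/
theorem stmt17 (d : ℕ) [NeZero d] (hd : 2 ≤ d)
    (N : Subgroup (FreeGroup (Fin d))) [N.Normal] (hN : N ≠ ⊥)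
    (f : (ℕ → Letter d) → ℝ) (hf : Holder f) :
    (∃ α > (0 : ℝ), ∃ V : ℝ, ∀ n : ℕ, 1 ≤ n → ∀ τ τ' : ℕ → IndEdge N,
        AdmInd τ → AdmInd τ' → (∀ i < n, τ i = τ' i) →
        |indVer f τ - indVer f τ'| ≤ V * Real.exp (-α * n)) ∧
    ∃ C > (0 : ℝ), ∀ w : List (IndEdge N), w ≠ [] → Red (ιw w) →
      Sw f (ιw w) - C ≤ SwInd (indVer f) w ∧ SwInd (indVer f) w ≤ Sw f (ιw w) := by
  obtain ⟨α, hα, V, hf⟩ := hf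
  have hr0 : (0:ℝ) < Real.exp (-α) := Real.exp_pos _
  have hr1 : Real.exp (-α) < 1 := by rw [Real.exp_lt_one_iff]; linarith
  have hV0 : 0 ≤ V := by
    have h0 := hf 1 le_rfl _ _ (adm_const (d := d)) (adm_const (d := d)) (fun _ _ => rfl)
    rw [sub_self, abs_zero] at h0
    by_contra hneg
    push_neg at hneg
    nlinarith [Real.exp_pos (-α * ((1:ℕ):ℝ)), h0]
  set V' := V / (1 - Real.exp (-α)) with hV'
  have hV'0 : 0 ≤ V' := div_nonneg hV0 (by linarith)
  constructor
  · -- Hölder continuity of the induced version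
    refine ⟨α, hα, V', ?_⟩
    intro n hn τ τ' hτ hτ' hagree
    have hτ0 : τ 0 = τ' 0 := hagree 0 hn
    have hb : ∀ i, (fun i => (τ i).val) i ≠ [] := fun i => (τ i).2.1
    have hb' : ∀ i, (fun i => (τ' i).val) i ≠ [] := fun i => (τ' i).2.1
    have hFbeq : Fb (fun i => (τ i).val) n = Fb (fun i => (τ' i).val) n :=
      Fb_congr fun i hi => congrArg Subtype.val (hagree i hi)
    have hagree' : ∀ i < (Fb (fun i => (τ i).val) n).length, ιseq τ i = ιseq τ' i := by
      intro i hi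
      show flattenSeq (fun i => (τ i).val) i = flattenSeq (fun i => (τ' i).val) i
      rw [flattenSeq_eq hb hi, flattenSeq_eq hb' (by rw [← hFbeq]; exact hi)]
      exact List.getElem_of_eq hFbeq hi
    obtain ⟨nm, rfl⟩ : ∃ nm, n = nm + 1 := ⟨n - 1, by omega⟩
    have hM : ((τ 0).val).length + nm ≤ (Fb (fun i => (τ i).val) (nm+1)).length := by
      have hfr : Fb (fun i => (τ i).val) (nm+1)
          = (τ 0).val ++ Fb (fun i => (τ (i+1)).val) nm := Fb_succ_front _ nm
      have hlg : nm ≤ (Fb (fun i => (τ (i+1)).val) nm).length :=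
        length_Fb_ge (fun i => hb (i+1)) nm
      rw [hfr, List.length_append]
      omega
    have hnle : (τ 0).val.length ≤ (Fb (fun i => (τ i).val) (nm+1)).length := by omega
    have hdist := birk_dist hα hV0 hf hτ hτ' hnle hagree'
    have heq : |indVer f τ - indVer f τ'| =
        |birk f (τ 0).val.length (ιseq τ) - birk f (τ 0).val.length (ιseq τ')| := by
      rw [indVer, indVer, ← hτ0]
    rw [heq]
    refine hdist.trans ?_
    apply mul_le_mul_of_nonneg_left _ hV'0
    apply Real.exp_le_exp.2
    have hcast : ((τ 0).val.length : ℝ) + nm ≤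
        ((Fb (fun i => (τ i).val) (nm+1)).length : ℝ) := by exact_mod_cast hM
    have hcast2 : ((nm + 1 : ℕ) : ℝ) = (nm : ℝ) + 1 := by push_cast; ring
    rw [hcast2]
    nlinarith [hα]
  · -- the uniform bound on induced Birkhoff sums
    refine ⟨V' * Real.exp (-α) + 1, by nlinarith [Real.exp_pos (-α)], ?_⟩
    intro w hwne hwred
    set l := ιw w with hl
    obtain ⟨τ₀, hτ₀⟩ := cylInd_nonempty hd hN w hwne hwred
    set S₁ := {y | ∃ τ ∈ Cyl l, y = birk f l.length τ} with hS₁d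
    set S₂ := {y | ∃ τ ∈ CylInd w, y =
      ∑ i ∈ Finset.range w.length, indVer f fun n => τ (n + i)} with hS₂d
    have h21 : S₂ ⊆ S₁ := by
      rintro y ⟨τ, hτ, rfl⟩
      refine ⟨ιseq τ, mem_Cyl_of_cylInd hτ, ?_⟩
      rw [hl]
      exact birk_ind f w τ hτ.2
    have hy2 : (∑ i ∈ Finset.range w.length, indVer f fun n => τ₀ (n + i)) ∈ S₂ :=
      ⟨τ₀, hτ₀, rfl⟩
    have hne2 : S₂.Nonempty := ⟨_, hy2⟩
    have hne1 : S₁.Nonempty := ⟨_, h21 hy2⟩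
    have hdiff : ∀ y ∈ S₁, ∀ y' ∈ S₁, y ≤ y' + V' * Real.exp (-α) := by
      rintro y ⟨τ, hτ, rfl⟩ y' ⟨τ', hτ', rfl⟩
      have hagree : ∀ i < l.length, τ i = τ' i := fun i hi => by
        rw [hτ.2 i hi, hτ'.2 i hi]
      have hdist := birk_dist hα hV0 hf hτ.1 hτ'.1 (le_refl l.length) hagree
      have hexp : Real.exp (-α * ((l.length : ℝ) + 1 - l.length)) = Real.exp (-α) := by
        congr 1
        ring
      rw [hexp] at hdist
      have habs := abs_sub_le_iff.1 hdist
      linarith [habs.1]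
    have hne1' := hne1
    obtain ⟨y₀, hy₀⟩ := hne1'
    have hbdd1 : BddAbove S₁ := ⟨y₀ + V' * Real.exp (-α), fun y hy => hdiff y hy y₀ hy₀⟩
    have hbdd2 : BddAbove S₂ := hbdd1.mono h21
    constructor
    · have hle : sSup S₁ ≤ sSup S₂ + (V' * Real.exp (-α) + 1) := by
        apply csSup_le hne1
        intro y hy
        have h1 : y ≤ (∑ i ∈ Finset.range w.length, indVer f fun n => τ₀ (n + i))
            + V' * Real.exp (-α) := hdiff y hy _ (h21 hy2)
        have h2 : (∑ i ∈ Finset.range w.length, indVer f fun n => τ₀ (n + i)) ≤ sSup S₂ :=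
          le_csSup hbdd2 hy2
        linarith
      show Sw f l - (V' * Real.exp (-α) + 1) ≤ SwInd (indVer f) w
      have e1 : Sw f l = sSup S₁ := rfl
      have e2 : SwInd (indVer f) w = sSup S₂ := rfl
      rw [e1, e2]
      linarith
    · show SwInd (indVer f) w ≤ Sw f l
      have e1 : Sw f l = sSup S₁ := rfl
      have e2 : SwInd (indVer f) w = sSup S₂ := rfl
      rw [e1, e2]
      exact csSup_le_csSup hbdd1 hne2 h21

end Stmt17
end
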